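/- arXiv:1612.01484 — 3 statements merged into one kernel-verified Lean document; each statement's English description precedes it below -/
import Mathlib

section
/- Let L be a Lie algebra over ℂ, and let y, h_1, …, h_n ∈ L and scalars c_1, …, c_n ∈ ℂ satisfy ⁅h_i, h_j⁆ = 0 for all 1 ≤ i, j ≤ n and ⁅y, h_i⁆ = c_i • y for all 1 ≤ i ≤ n. Then for all non-negative integers p, q_1, …, q_n, the following identity holds in the universal enveloping algebra U of the loop algebra of L: ι(y t^p) · ∏_{i=1}^n ι(h_i t^{−q_i}) = Σ_{A ⊆ {1,…,n}} (∏_{i∈A} c_i) · (∏_{i∈{1,…,n}∖A} ι(h_i t^{−q_i})) · ι(y t^{p − Σ_{i∈A} q_i}). -/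
/-!
Write `Y s = ι(y tˢ)` and `Hᵢ = ι(hᵢ t^{-qᵢ})`. In `U` the `Hᵢ` commute, and
`Y s * Hᵢ = Hᵢ * Y s + cᵢ • Y (s - qᵢ)`, since `⁅y tˢ, hᵢ t^{-qᵢ}⁆ = cᵢ • y t^{s-qᵢ}`.
Moving `Y p` to the right through `H₁ ⋯ Hₙ` one factor at a time, each `Hᵢ` is either passed
or absorbed at the cost of a factor `cᵢ` and a shift of the exponent by `-qᵢ`; the set `A`
records the absorbed factors.
-/

/- The loop algebra of a complex Lie algebra `L` is the base change
`ℂ[t,t⁻¹] ⊗[ℂ] L`; it is a Lie algebra over `ℂ`. -/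

open scoped TensorProduct

noncomputable instance loopLieAlgebra (L : Type*) [LieRing L] [LieAlgebra ℂ L] :
    LieAlgebra ℂ (LaurentPolynomial ℂ ⊗[ℂ] L) where
  lie_smul c x y := by
    rw [← algebraMap_smul (LaurentPolynomial ℂ) c y,
      LieAlgebra.lie_smul ((algebraMap ℂ (LaurentPolynomial ℂ)) c) x y, algebraMap_smul]

open Finset

theorem Finset.prod_map_sort_eq_noncommProd {α M : Type*} [LinearOrder α] [Monoid M]
    (s : Finset α) (f : α → M) (comm) :
    ((s.sort (· ≤ ·)).map f).prod = s.noncommProd f comm := by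
  rw [← Multiset.noncommProd_coe, noncommProd]
  · congr
    rw [← Multiset.map_coe, sort_eq]
  · simpa [← Multiset.map_coe, sort_eq] using s.noncommProd_lemma f comm

section ShiftCommutation

variable {R U ι G : Type*} [CommSemiring R] [Semiring U] [Algebra R U] [DecidableEq ι]
  [AddCommGroup G] (Y : G → U) (H : ι → U) (c : ι → R) (q : ι → G)

theorem mul_noncommProd_eq_sum_powerset (hcomm : Pairwise fun i j => Commute (H i) (H j))
    (hY : ∀ i s, Y s * H i = H i * Y s + c i • Y (s - q i)) (S : Finset ι) (s : G) :
    Y s * S.noncommProd H (hcomm.set_pairwise S) =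
      ∑ A ∈ S.powerset, (∏ i ∈ A, c i) •
        ((S \ A).noncommProd H (hcomm.set_pairwise ↑(S \ A)) * Y (s - ∑ i ∈ A, q i)) := by
  induction S using Finset.induction_on generalizing s with
  | empty => rw [powerset_empty, sum_singleton, empty_sdiff, noncommProd_empty]; simp
  | insert a S ha ih =>
    rw [noncommProd_insert_of_notMem _ _ _ _ ha, ← mul_assoc, hY, add_mul, mul_assoc,
      smul_mul_assoc, ih, ih, mul_sum, smul_sum, sum_powerset_insert ha]
    congr 1
    · refine sum_congr rfl fun A hA => ?_
      have haA : a ∉ A := fun h => ha (mem_powerset.1 hA h)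
      rw [insert_sdiff_of_notMem _ haA,
        noncommProd_insert_of_notMem _ _ _ _ fun h => ha (mem_sdiff.1 h).1,
        mul_smul_comm, mul_assoc]
    · refine sum_congr rfl fun A hA => ?_
      have haA : a ∉ A := fun h => ha (mem_powerset.1 hA h)
      rw [insert_sdiff_insert, sdiff_insert_of_notMem ha, prod_insert haA, sum_insert haA,
        smul_smul, sub_sub]

end ShiftCommutation

theorem UniversalEnvelopingAlgebra.ι_mul_ι_eq_ι_mul_ι_add_ι_lie {R L : Type*} [CommRing R]
    [LieRing L] [LieAlgebra R L] (x z : L) :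
    ι R x * ι R z = ι R z * ι R x + ι R ⁅x, z⁆ := by
  let _ : LieRing (UniversalEnvelopingAlgebra R L) := LieRing.ofAssociativeRing
  rw [LieHom.map_lie, Ring.lie_def]
  abel

theorem LaurentPolynomial.T_tmul_lie_T_tmul {R L : Type*} [CommRing R] [LieRing L]
    [LieAlgebra R L] (a b : ℤ) (x z : L) :
    ⁅(T a : LaurentPolynomial R) ⊗ₜ[R] x, (T b : LaurentPolynomial R) ⊗ₜ[R] z⁆ =
      (T (a + b) : LaurentPolynomial R) ⊗ₜ[R] ⁅x, z⁆ := by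
  rw [LieAlgebra.ExtendScalars.bracket_tmul, T_add]

/-- If `⁅h i, h j⁆ = 0` and `⁅y, h i⁆ = c i • y` in `L`, then in the
universal enveloping algebra of the loop algebra of `L` we have
`ι(y tᵖ) ⬝ ∏ᵢ ι(hᵢ t^{-qᵢ}) = ∑_{A ⊆ [n]} (∏_{i∈A} cᵢ) ⬝ (∏_{i∉A} ι(hᵢ t^{-qᵢ})) ⬝
ι(y t^{p - ∑_{i∈A} qᵢ})`. -/
theorem statement0 (L : Type*) [LieRing L] [LieAlgebra ℂ L]
    (n : ℕ) (y : L) (h : Fin n → L) (c : Fin n → ℂ)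
    (hcomm : ∀ i j : Fin n, ⁅h i, h j⁆ = 0)
    (hy : ∀ i : Fin n, ⁅y, h i⁆ = c i • y)
    (p : ℕ) (q : Fin n → ℕ) :
    UniversalEnvelopingAlgebra.ι ℂ ((LaurentPolynomial.T (p : ℤ) : LaurentPolynomial ℂ) ⊗ₜ[ℂ] y) *
      (List.ofFn fun i : Fin n =>
        UniversalEnvelopingAlgebra.ι ℂ ((LaurentPolynomial.T (-(q i : ℤ)) : LaurentPolynomial ℂ) ⊗ₜ[ℂ] h i)).prod =
    ∑ A : Finset (Fin n), (∏ i ∈ A, c i) •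
      ((((Finset.univ \ A).sort (· ≤ ·)).map (fun i : Fin n =>
          UniversalEnvelopingAlgebra.ι ℂ ((LaurentPolynomial.T (-(q i : ℤ)) : LaurentPolynomial ℂ) ⊗ₜ[ℂ] h i))).prod *
        UniversalEnvelopingAlgebra.ι ℂ
          ((LaurentPolynomial.T ((p : ℤ) - ∑ i ∈ A, (q i : ℤ)) : LaurentPolynomial ℂ) ⊗ₜ[ℂ] y)) := by
  set Y : ℤ → UniversalEnvelopingAlgebra ℂ (LaurentPolynomial ℂ ⊗[ℂ] L) := fun s =>
    UniversalEnvelopingAlgebra.ι ℂ ((LaurentPolynomial.T s : LaurentPolynomial ℂ) ⊗ₜ[ℂ] y)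
  set H : Fin n → UniversalEnvelopingAlgebra ℂ (LaurentPolynomial ℂ ⊗[ℂ] L) := fun i =>
    UniversalEnvelopingAlgebra.ι ℂ ((LaurentPolynomial.T (-(q i : ℤ)) : LaurentPolynomial ℂ) ⊗ₜ[ℂ] h i)
  have hH : Pairwise fun i j => Commute (H i) (H j) := fun i j _ => by
    refine (UniversalEnvelopingAlgebra.ι_mul_ι_eq_ι_mul_ι_add_ι_lie _ _).trans ?_
    rw [LaurentPolynomial.T_tmul_lie_T_tmul, hcomm, TensorProduct.tmul_zero, map_zero, add_zero]
  have hY : ∀ i s, Y s * H i = H i * Y s + c i • Y (s - q i) := fun i s => by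
    simp only [Y, H]
    rw [UniversalEnvelopingAlgebra.ι_mul_ι_eq_ι_mul_ι_add_ι_lie,
      LaurentPolynomial.T_tmul_lie_T_tmul, hy, TensorProduct.tmul_smul, map_smul, sub_eq_add_neg]
  rw [List.ofFn_eq_map, ← Fin.sort_univ, prod_map_sort_eq_noncommProd _ _ (hH.set_pairwise _),
    mul_noncommProd_eq_sum_powerset _ _ _ _ hH hY, powerset_univ]
  simp_rw [prod_map_sort_eq_noncommProd _ _ (hH.set_pairwise _)]
  rfl
end

section
/- Let P be a GT pattern with bounding row λ = (λ_1, …, λ_r, λ_{r+1}) satisfying λ_{r+1} = 0, and weight coordinates a_1, …, a_{r+1}. Define the triangular area △(P) = Σ_{1≤i≤j≤r} d_{i,j}·d'_{i,j} and the trapezoidal area □(P) = Σ_{1≤i≤j≤r} d_{i,j}·(Σ_{p=i}^j d'_{p,j}). Then □(P) = ½·(Σ_{p=1}^{r} λ_p² − Σ_{j=1}^{r+1} a_j²); moreover, for every POP 𝐏 with underlying pattern P, □(P) = △(P) + d(𝐏) − Σ_{1≤i≤j≤r} |π(j)^i|. -/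
/-- The difference `d_{i,j} = λ^{j+1}_i − λ^j_i` of a triangular array
(`lam j i` denotes `λ^j_i`). -/
def dd (lam : ℕ → ℕ → ℤ) (i j : ℕ) : ℤ := lam (j+1) i - lam j i

/-- The difference `d'_{i,j} = λ^j_i − λ^{j+1}_{i+1}`. -/
def dd' (lam : ℕ → ℕ → ℤ) (i j : ℕ) : ℤ := lam j i - lam (j+1) (i+1)

/-- A Gelfand–Tsetlin pattern of rank `r`: an array of integers `λ^j_i`
(`1 ≤ i ≤ j ≤ r+1`) with `λ^{j+1}_i ≥ λ^j_i ≥ λ^{j+1}_{i+1}`. -/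
structure GTPattern (r : ℕ) where
  lam : ℕ → ℕ → ℤ
  ineq₁ : ∀ i j : ℕ, 1 ≤ i → i ≤ j → j ≤ r → lam j i ≤ lam (j+1) i
  ineq₂ : ∀ i j : ℕ, 1 ≤ i → i ≤ j → j ≤ r → lam (j+1) (i+1) ≤ lam j i

/-- The shift of a triangular array by `k`:  `η^j_i = λ^j_i + 2k` if `i = 1 < j`,
`η^j_i = λ^j_i` if `1 < i = j`, and `η^j_i = λ^j_i + k` otherwise. -/
def shiftFun (lam : ℕ → ℕ → ℤ) (k : ℕ) : ℕ → ℕ → ℤ := fun j i =>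
  if i = 1 ∧ 1 < j then lam j i + 2 * k
  else if 1 < i ∧ i = j then lam j i
  else lam j i + k

/-- A partition overlaid pattern (POP) of rank `r`: a GT pattern together with, for each
`1 ≤ i ≤ j ≤ r`, a partition `π(j)^i` (given by its parts `part i j u`, `u ≥ 1`, weakly
decreasing) fitting into the rectangle `(d_{i,j}, d'_{i,j})`: at most `d_{i,j}` parts,
each of size at most `d'_{i,j}`. -/
structure POP (r : ℕ) extends GTPattern r where
  part : ℕ → ℕ → ℕ → ℕ
  part_antitone : ∀ i j u v : ℕ, 1 ≤ u → u ≤ v → part i j v ≤ part i j u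
  part_le : ∀ i j : ℕ, 1 ≤ i → i ≤ j → j ≤ r → ∀ u : ℕ, 1 ≤ u →
    (part i j u : ℤ) ≤ dd' lam i j
  part_vanish : ∀ i j : ℕ, 1 ≤ i → i ≤ j → j ≤ r → ∀ u : ℕ,
    dd lam i j < (u : ℤ) → part i j u = 0

/-- `|π(j)^i|`, the sum of the parts of the overlay partition `π(j)^i`. -/
def partSize (lam : ℕ → ℕ → ℤ) (part : ℕ → ℕ → ℕ → ℕ) (i j : ℕ) : ℤ :=
  ∑ u ∈ Finset.Icc 1 (dd lam i j).toNat, (part i j u : ℤ)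

/-- `d^j_i(Q) = d_{i,j}·(Σ_{p=i+1}^j d'_{p,j}) + |π(j)^i|`. -/
def dji (lam : ℕ → ℕ → ℤ) (part : ℕ → ℕ → ℕ → ℕ) (i j : ℕ) : ℤ :=
  dd lam i j * (∑ p ∈ Finset.Icc (i+1) j, dd' lam p j) + partSize lam part i j

/-- The depth `d(Q) = Σ_{1 ≤ i ≤ j ≤ r} d^j_i(Q)` of a POP of rank `r`. -/
def depth (r : ℕ) (lam : ℕ → ℕ → ℤ) (part : ℕ → ℕ → ℕ → ℕ) : ℤ :=
  ∑ j ∈ Finset.Icc 1 r, ∑ i ∈ Finset.Icc 1 j, dji lam part i j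

/-- The `j`-th weight coordinate `a_j = Σ_{i=1}^j λ^j_i − Σ_{i=1}^{j−1} λ^{j−1}_i`
of a triangular array. -/
def wtCoord (lam : ℕ → ℕ → ℤ) (j : ℕ) : ℤ :=
  (∑ i ∈ Finset.Icc 1 j, lam j i) - ∑ i ∈ Finset.Icc 1 (j-1), lam (j-1) i

/-- The triangular area `△(P) = Σ_{1≤i≤j≤r} d_{i,j}·d'_{i,j}`. -/
def triArea (r : ℕ) (lam : ℕ → ℕ → ℤ) : ℤ :=
  ∑ j ∈ Finset.Icc 1 r, ∑ i ∈ Finset.Icc 1 j, dd lam i j * dd' lam i j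

/-- The trapezoidal area `□(P) = Σ_{1≤i≤j≤r} d_{i,j}·(Σ_{p=i}^j d'_{p,j})`. -/
def trapArea (r : ℕ) (lam : ℕ → ℕ → ℤ) : ℤ :=
  ∑ j ∈ Finset.Icc 1 r, ∑ i ∈ Finset.Icc 1 j,
    dd lam i j * (∑ p ∈ Finset.Icc i j, dd' lam p j)

/-! Row `j` of the trapezoidal area, doubled, equals `‖λ^{j+1}‖² − ‖λ^j‖² − a_{j+1}²`; summing
over the rows telescopes to `‖λ^{r+1}‖² − ‖λ^1‖² − Σ_{j ≥ 2} a_j²`, and `a_1 = λ^1_1`.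
The second identity only splits off the diagonal term `p = i` of each inner sum. -/

theorem two_mul_sum_sub_mul_sum_sub_eq {R : Type*} [CommRing R] (x y : ℕ → R) (j : ℕ) :
    2 * ∑ i ∈ Finset.Icc 1 j, (x i - y i) * ∑ p ∈ Finset.Icc i j, (y p - x (p + 1))
      = ∑ i ∈ Finset.Icc 1 (j + 1), x i ^ 2 - ∑ i ∈ Finset.Icc 1 j, y i ^ 2
        - (∑ i ∈ Finset.Icc 1 (j + 1), x i - ∑ i ∈ Finset.Icc 1 j, y i) ^ 2 := by
  induction j with
  | zero => simp
  | succ j ih =>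
    have inner_succ : ∀ i ∈ Finset.Icc 1 j,
        (x i - y i) * ∑ p ∈ Finset.Icc i (j + 1), (y p - x (p + 1))
          = (x i - y i) * ∑ p ∈ Finset.Icc i j, (y p - x (p + 1))
            + (x i - y i) * (y (j + 1) - x (j + 2)) := by
      intro i hi
      rw [Finset.sum_Icc_succ_top (by grind)]
      ring
    simp only [Finset.sum_Icc_succ_top (Nat.le_add_left 1 _)] at ih ⊢
    rw [Finset.sum_congr rfl inner_succ, Finset.sum_add_distrib, ← Finset.sum_mul,
      Finset.sum_sub_distrib]
    simp only [Finset.Icc_self, Finset.sum_singleton]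
    linear_combination ih

theorem two_mul_trapArea (r : ℕ) (lam : ℕ → ℕ → ℤ) :
    2 * trapArea r lam = ∑ i ∈ Finset.Icc 1 (r + 1), lam (r + 1) i ^ 2
      - ∑ j ∈ Finset.Icc 1 (r + 1), wtCoord lam j ^ 2 := by
  induction r with
  | zero => simp [trapArea, wtCoord]
  | succ r ih =>
    have row := two_mul_sum_sub_mul_sum_sub_eq (lam (r + 2)) (lam (r + 1)) (r + 1)
    simp only [trapArea] at ih ⊢
    rw [Finset.sum_Icc_succ_top (Nat.le_add_left 1 r), mul_add, ih,
      Finset.sum_Icc_succ_top (Nat.le_add_left 1 (r + 1)) (fun j => wtCoord lam j ^ 2)]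
    simp only [dd, dd', wtCoord, Nat.add_sub_cancel] at row ⊢
    linear_combination row

theorem trapArea_eq_triArea_add (r : ℕ) (lam : ℕ → ℕ → ℤ) :
    trapArea r lam = triArea r lam + ∑ j ∈ Finset.Icc 1 r, ∑ i ∈ Finset.Icc 1 j,
      dd lam i j * ∑ p ∈ Finset.Icc (i + 1) j, dd' lam p j := by
  simp only [trapArea, triArea, ← Finset.sum_add_distrib]
  refine Finset.sum_congr rfl fun j _ => Finset.sum_congr rfl fun i hi => ?_
  rw [Finset.Icc_add_one_left_eq_Ioc, ← Finset.add_sum_Ioc_eq_sum_Icc (Finset.mem_Icc.mp hi).2]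
  ring

theorem depth_eq_add_sum_partSize (r : ℕ) (lam : ℕ → ℕ → ℤ) (part : ℕ → ℕ → ℕ → ℕ) :
    depth r lam part = ∑ j ∈ Finset.Icc 1 r, ∑ i ∈ Finset.Icc 1 j,
        dd lam i j * ∑ p ∈ Finset.Icc (i + 1) j, dd' lam p j
      + ∑ j ∈ Finset.Icc 1 r, ∑ i ∈ Finset.Icc 1 j, partSize lam part i j := by
  simp only [depth, dji, Finset.sum_add_distrib]

theorem statement13_general (r : ℕ) (P : GTPattern r)
    (hlast : P.lam (r+1) (r+1) = 0) :
    ((trapArea r P.lam : ℚ) = (1/2 : ℚ) *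
        ((∑ p ∈ Finset.Icc 1 r, (P.lam (r+1) p : ℚ)^2) -
          ∑ j ∈ Finset.Icc 1 (r+1), (wtCoord P.lam j : ℚ)^2)) ∧
    (∀ Q : POP r, Q.toGTPattern = P →
      trapArea r P.lam = triArea r P.lam + depth r P.lam Q.part -
        ∑ j ∈ Finset.Icc 1 r, ∑ i ∈ Finset.Icc 1 j, partSize P.lam Q.part i j) := by
  refine ⟨?_, fun Q _ => ?_⟩
  · have h := two_mul_trapArea r P.lam
    rw [Finset.sum_Icc_succ_top (Nat.le_add_left 1 r), hlast] at h
    have hq := congrArg (Int.cast : ℤ → ℚ) h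
    push_cast at hq
    linarith
  · rw [trapArea_eq_triArea_add, depth_eq_add_sum_partSize]
    ring

/-- Let `P` be a GT pattern whose bounding row `(λ_1,…,λ_{r+1})`
satisfies `λ_{r+1} = 0`, with weight coordinates `a_1,…,a_{r+1}`.  Then
`□(P) = ½·(Σ_{p=1}^r λ_p² − Σ_{j=1}^{r+1} a_j²)`; moreover, for every POP `Q` with
underlying pattern `P`, `□(P) = △(P) + d(Q) − Σ_{1≤i≤j≤r} |π(j)^i|`. -/
theorem statement13 (r : ℕ) (hr : 1 ≤ r) (P : GTPattern r)
    (hlast : P.lam (r+1) (r+1) = 0) :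
    ((trapArea r P.lam : ℚ) = (1/2 : ℚ) *
        ((∑ p ∈ Finset.Icc 1 r, (P.lam (r+1) p : ℚ)^2) -
          ∑ j ∈ Finset.Icc 1 (r+1), (wtCoord P.lam j : ℚ)^2)) ∧
    (∀ Q : POP r, Q.toGTPattern = P →
      trapArea r P.lam = triArea r P.lam + depth r P.lam Q.part -
        ∑ j ∈ Finset.Icc 1 r, ∑ i ∈ Finset.Icc 1 j, partSize P.lam Q.part i j) :=
  statement13_general r P hlast
end

section
/- Let 𝐏 be a POP whose pattern P has bounding sequence (λ_1 ≥ λ_2 ≥ … ≥ λ_r ≥ λ_{r+1} = 0), and let k ∈ ℤ_{≥0}. Then the shifted array P^k is again a GT pattern, its bounding sequence is (λ_1 + 2k, λ_2 + k, …, λ_r + k, 0) (the sequence associated to λ + kθ, where θ is the highest root), and every overlay partition π(j)^i of 𝐏 fits into the rectangle (d_{i,j}(P^k), d'_{i,j}(P^k)). Hence the pair 𝐏^k = (P^k, (π(j)^i)) is a POP with bounding sequence λ + kθ. -/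
/-!
Shifting by `k` adds `k` to the diagonal differences `d_{i,i}` and to the first-column
differences `d'_{1,j}` and leaves all other differences unchanged. So no difference
decreases: the interlacing inequalities (`d, d' ≥ 0`) survive, and every rectangle
`(d_{i,j}, d'_{i,j})` only grows, so the old overlay partitions still fit.
-/

section shiftFun

variable (lam : ℕ → ℕ → ℤ) (k : ℕ) {i j : ℕ}

theorem shiftFun_one (hj : 1 < j) : shiftFun lam k j 1 = lam j 1 + 2 * k := by
  simp [shiftFun, hj]

theorem shiftFun_self (hi : 1 < i) : shiftFun lam k i i = lam i i := by
  simp [shiftFun, hi, hi.ne']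

theorem shiftFun_of_one_lt_of_lt (hi : 1 < i) (hij : i < j) :
    shiftFun lam k j i = lam j i + k := by
  simp [shiftFun, hi.ne', hij.ne]

theorem dd_shiftFun (hi : 1 ≤ i) (hij : i ≤ j) :
    dd (shiftFun lam k) i j = dd lam i j + if i = j then (k : ℤ) else 0 := by
  simp only [dd, shiftFun]
  split_ifs <;> omega

theorem dd'_shiftFun (hi : 1 ≤ i) (hij : i ≤ j) :
    dd' (shiftFun lam k) i j = dd' lam i j + if i = 1 then (k : ℤ) else 0 := by
  simp only [dd', shiftFun]
  split_ifs <;> omega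

theorem dd_le_dd_shiftFun (hi : 1 ≤ i) (hij : i ≤ j) :
    dd lam i j ≤ dd (shiftFun lam k) i j := by
  rw [dd_shiftFun lam k hi hij]
  split_ifs <;> omega

theorem dd'_le_dd'_shiftFun (hi : 1 ≤ i) (hij : i ≤ j) :
    dd' lam i j ≤ dd' (shiftFun lam k) i j := by
  rw [dd'_shiftFun lam k hi hij]
  split_ifs <;> omega

end shiftFun

variable {r : ℕ}

def GTPattern.shift (P : GTPattern r) (k : ℕ) : GTPattern r where
  lam := shiftFun P.lam k
  ineq₁ i j hi hij hjr := by
    have := dd_le_dd_shiftFun P.lam k hi hij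
    have := P.ineq₁ i j hi hij hjr
    simp only [dd] at *
    omega
  ineq₂ i j hi hij hjr := by
    have := dd'_le_dd'_shiftFun P.lam k hi hij
    have := P.ineq₂ i j hi hij hjr
    simp only [dd'] at *
    omega

def POP.shift (P : POP r) (k : ℕ) : POP r where
  toGTPattern := P.toGTPattern.shift k
  part := P.part
  part_antitone := P.part_antitone
  part_le i j hi hij hjr u hu :=
    (P.part_le i j hi hij hjr u hu).trans (dd'_le_dd'_shiftFun P.lam k hi hij)
  part_vanish i j hi hij hjr u hu :=
    P.part_vanish i j hi hij hjr u ((dd_le_dd_shiftFun P.lam k hi hij).trans_lt hu)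

/-- Let `P` be a POP whose pattern has bounding sequence
`(λ_1 ≥ … ≥ λ_r ≥ λ_{r+1} = 0)` and let `k ∈ ℤ_{≥0}`.  Then the shifted array `P^k` is
again a GT pattern, its bounding sequence is `(λ_1 + 2k, λ_2 + k, …, λ_r + k, 0)` (the
sequence associated to `λ + kθ`), and every overlay partition of `P` fits into the
rectangle `(d_{i,j}(P^k), d'_{i,j}(P^k))`; hence the shifted pattern together with the
same overlay partitions is a POP with bounding sequence `λ + kθ`. -/
theorem statement14 (r : ℕ) (hr : 1 ≤ r) (P : POP r)
    (hlast : P.lam (r+1) (r+1) = 0) (k : ℕ) :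
    ∃ Q : POP r, Q.lam = shiftFun P.lam k ∧ Q.part = P.part ∧
      Q.lam (r+1) 1 = P.lam (r+1) 1 + 2 * k ∧
      (∀ p : ℕ, 1 < p → p ≤ r → Q.lam (r+1) p = P.lam (r+1) p + k) ∧
      Q.lam (r+1) (r+1) = 0 := by
  refine ⟨P.shift k, rfl, rfl, shiftFun_one P.lam k (by omega), ?_, ?_⟩
  · intro p hp hpr
    exact shiftFun_of_one_lt_of_lt P.lam k hp (by omega)
  · exact (shiftFun_self P.lam k (by omega)).trans hlast
end
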